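/- Define t₁(w) := −4w⁵ + 12w⁴ − 13w³ + 8w² − w. Then t₁(w) > 0 for every w ∈ [0.162, 1), and t₁(w) < 0 for every w ∈ (0, 0.161]. -/
import Mathlib


noncomputable def t1 (w : ℝ) : ℝ := -4*w^5+12*w^4-13*w^3+8*w^2-w

theorem stmt4 :
    (∀ w : ℝ, w ∈ Set.Ico (0.162 : ℝ) 1 → 0 < t1 w) ∧
    (∀ w : ℝ, w ∈ Set.Ioc (0 : ℝ) 0.161 → t1 w < 0) := by
  constructor
  · rintro w ⟨h1, h2⟩
    have hw : (0:ℝ) < w := by linarith [show (0:ℝ) < 0.162 by norm_num]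
    unfold t1
    nlinarith [sq_nonneg w, sq_nonneg (w-1), sq_nonneg (w*(1-w)), mul_pos hw hw, sq_nonneg (w - 0.162), mul_nonneg (sub_nonneg.mpr h1) (sub_nonneg.mpr h2.le), sq_nonneg ((w-0.162)*(1-w)), mul_nonneg (mul_nonneg (sub_nonneg.mpr h1) (sub_nonneg.mpr h2.le)) hw.le]
  · rintro w ⟨h1, h2⟩
    unfold t1
    nlinarith [sq_nonneg w, sq_nonneg (w-0.161), mul_pos h1 h1, mul_nonneg (sub_nonneg.mpr h2) h1.le, mul_nonneg (mul_nonneg (sub_nonneg.mpr h2) h1.le) h1.le, mul_nonneg (mul_nonneg (mul_nonneg (sub_nonneg.mpr h2) h1.le) h1.le) h1.le, sq_nonneg (w*(w-0.161))]
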